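/- Let p be a prime number and consider the semidirect product G = ℤ_p ⋊ ℤ/2ℤ, where the nontrivial element of ℤ/2ℤ acts on the additive group of the p-adic integers ℤ_p by negation, and G carries the product topology. Then the group homomorphism from the free product (ℤ/2ℤ) * (ℤ/2ℤ) to G sending the generator of the first factor to (0, 1̄) and the generator of the second factor to (1, 1̄) is injective and has dense image. In particular, the profinite group ℤ_p ⋊ ℤ/2ℤ possesses a dense subgroup isomorphic to the amalgam (ℤ/2ℤ) * (ℤ/2ℤ), i.e. it is presqu'amalgamé. -/

import Mathlib

/-!
The reflections `a = ψ (inl 1̄)` and `b = ψ (inr 1̄)` act on `ℤ_p` as `x ↦ -x` and `x ↦ 1 - x`.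
The infinite dihedral group `D∞` is generated by two involutions `sr 0`, `sr 1` with no further
relation, so it maps onto `ℤ/2ℤ * ℤ/2ℤ`, and its composite with `ψ` is the affine action of `D∞`
on `ℤ_p`: `r i ↦ (x ↦ x - i)`, `sr i ↦ (x ↦ i - x)`. This composite is injective because
`ℤ → ℤ_p` is, hence so is `ψ`; and its image, which is the range of `ψ`, is `ℤ ⋊ ℤ/2ℤ`, dense
because `ℤ` is dense in `ℤ_p`.
-/

open Function Set

section Involutions

variable {H : Type*} [Group H] {a b : H}

theorem zpow_mul_eq_mul_zpow_neg_of_involutions (ha : a * a = 1) (hb : b * b = 1) (i : ℤ) :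
    (a * b) ^ i * a = a * (a * b) ^ (-i) := by
  have ha' : a⁻¹ = a := inv_eq_of_mul_eq_one_right ha
  have hb' : b⁻¹ = b := inv_eq_of_mul_eq_one_right hb
  have hconj : a * (a * b) * a⁻¹ = (a * b)⁻¹ := by
    rw [mul_inv_rev, ha', hb', ← mul_assoc, ha, one_mul]
  calc (a * b) ^ i * a = (a * (a * b) * a⁻¹) ^ (-i) * a := by rw [hconj, inv_zpow', neg_neg]
    _ = a * (a * b) ^ (-i) := by rw [conj_zpow, inv_mul_cancel_right]

end Involutions

namespace DihedralGroup

variable {H : Type*} [Group H]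

/-- The map `sr 0 ↦ a`, `sr 1 ↦ b`. The indices live in `ZMod 0`, which is `ℤ`. -/
def liftInvolutions (a b : H) (ha : a * a = 1) (hb : b * b = 1) : DihedralGroup 0 →* H where
  toFun
    | r (i : ℤ) => (a * b) ^ i
    | sr (i : ℤ) => a * (a * b) ^ i
  map_one' := zpow_zero _
  map_mul' := by
    have hrel := zpow_mul_eq_mul_zpow_neg_of_involutions ha hb
    have h_r_sr (i j : ℤ) : a * (a * b) ^ (j - i) = (a * b) ^ i * (a * (a * b) ^ j) := by
      rw [← mul_assoc, hrel, mul_assoc, ← zpow_add, neg_add_eq_sub]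
    have h_sr_r (i j : ℤ) : a * (a * b) ^ (i + j) = a * (a * b) ^ i * (a * b) ^ j := by
      rw [zpow_add, mul_assoc]
    have h_sr_sr (i j : ℤ) : (a * b) ^ (j - i) = a * (a * b) ^ i * (a * (a * b) ^ j) := by
      rw [mul_assoc a, ← mul_assoc _ a, hrel, ← mul_assoc, ← mul_assoc, ha, one_mul,
        ← zpow_add, neg_add_eq_sub]
    rintro (i | i) (j | j)
    exacts [zpow_add _ i j, h_r_sr i j, h_sr_r i j, h_sr_sr i j]

variable {a b : H} {ha : a * a = 1} {hb : b * b = 1}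

theorem liftInvolutions_r (i : ℤ) : liftInvolutions a b ha hb (r i) = (a * b) ^ i := rfl

theorem liftInvolutions_sr (i : ℤ) : liftInvolutions a b ha hb (sr i) = a * (a * b) ^ i := rfl

theorem liftInvolutions_sr_zero : liftInvolutions a b ha hb (sr 0) = a :=
  (liftInvolutions_sr 0).trans (by rw [zpow_zero, mul_one])

theorem liftInvolutions_sr_one : liftInvolutions a b ha hb (sr 1) = b :=
  (liftInvolutions_sr 1).trans (by rw [zpow_one, ← mul_assoc, ha, one_mul])

theorem _root_.MonoidHom.comp_liftInvolutions {K : Type*} [Group K] (f : H →* K) {a' b' : K}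
    {ha' : a' * a' = 1} {hb' : b' * b' = 1} (hfa : f a = a') (hfb : f b = b') :
    f.comp (liftInvolutions a b ha hb) = liftInvolutions a' b' ha' hb' := by
  have hpow (i : ℤ) : f ((a * b) ^ i) = (a' * b') ^ i := by rw [map_zpow, map_mul, hfa, hfb]
  ext (i | i)
  exacts [hpow i, (map_mul f _ _).trans (congrArg₂ (· * ·) hfa (hpow i))]

end DihedralGroup

open DihedralGroup Multiplicative

namespace ZMod

theorem ofAdd_one_mul_self : (ofAdd 1 : Multiplicative (ZMod 2)) * ofAdd 1 = 1 := rfl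

theorem ofAdd_one_ne_one : (ofAdd 1 : Multiplicative (ZMod 2)) ≠ 1 := by decide

theorem eq_one_or_eq_ofAdd_one (x : Multiplicative (ZMod 2)) : x = 1 ∨ x = ofAdd 1 := by
  revert x; decide

end ZMod

open ZMod

section Coprod

open Monoid.Coprod

def dihedralToCoprod : DihedralGroup 0 →* Multiplicative (ZMod 2) ∗ Multiplicative (ZMod 2) :=
  liftInvolutions (inl (ofAdd 1)) (inr (ofAdd 1))
    (by rw [← map_mul, ofAdd_one_mul_self, map_one])
    (by rw [← map_mul, ofAdd_one_mul_self, map_one])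

theorem dihedralToCoprod_surjective : Surjective dihedralToCoprod := by
  rw [← MonoidHom.range_eq_top, eq_top_iff, ← range_inl_sup_range_inr, sup_le_iff]
  constructor <;> rintro _ ⟨x, rfl⟩ <;> rcases eq_one_or_eq_ofAdd_one x with rfl | rfl
  · exact ⟨1, by rw [map_one, map_one]⟩
  · exact ⟨sr 0, liftInvolutions_sr_zero⟩
  · exact ⟨1, by rw [map_one, map_one]⟩
  · exact ⟨sr 1, liftInvolutions_sr_one⟩

end Coprod

namespace SemidirectProduct

variable {R : Type*} [Ring R] {φ : Multiplicative (ZMod 2) →* MulAut (Multiplicative R)}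

def reflection (x : R) : Multiplicative R ⋊[φ] Multiplicative (ZMod 2) := ⟨ofAdd x, ofAdd 1⟩

theorem reflection_mul_reflection (hφ : φ (ofAdd 1) = MulEquiv.inv (Multiplicative R))
    (x y : R) :
    (reflection x * reflection y : Multiplicative R ⋊[φ] _) = inl (ofAdd (x - y)) := by
  ext
  · simp [reflection, hφ, sub_eq_add_neg]
  · exact ofAdd_one_mul_self


theorem reflection_mul_inl (hφ : φ (ofAdd 1) = MulEquiv.inv (Multiplicative R)) (x y : R) :
    (reflection x * inl (ofAdd y) : Multiplicative R ⋊[φ] _) = reflection (x - y) := by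
  ext
  · simp [reflection, hφ, sub_eq_add_neg]
  · exact mul_one (ofAdd 1)

def dihedralEmbedding (hφ : φ (ofAdd 1) = MulEquiv.inv (Multiplicative R)) :
    DihedralGroup 0 →* Multiplicative R ⋊[φ] Multiplicative (ZMod 2) :=
  liftInvolutions (reflection 0) (reflection 1)
    (by rw [reflection_mul_reflection hφ, sub_self, ofAdd_zero, map_one])
    (by rw [reflection_mul_reflection hφ, sub_self, ofAdd_zero, map_one])

theorem dihedralEmbedding_r (hφ : φ (ofAdd 1) = MulEquiv.inv (Multiplicative R)) (i : ℤ) :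
    dihedralEmbedding hφ (r i) = inl (ofAdd (-i : R)) := by
  refine (liftInvolutions_r i).trans ?_
  rw [reflection_mul_reflection hφ, zero_sub, ← map_zpow, ← ofAdd_zsmul, zsmul_neg, zsmul_one]

theorem dihedralEmbedding_sr (hφ : φ (ofAdd 1) = MulEquiv.inv (Multiplicative R)) (i : ℤ) :
    dihedralEmbedding hφ (sr i) = reflection (i : R) := by
  calc dihedralEmbedding hφ (sr i) = reflection 0 * dihedralEmbedding hφ (r i) := rfl
    _ = reflection (i : R) := by
      rw [dihedralEmbedding_r hφ, reflection_mul_inl hφ, zero_sub, neg_neg]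

theorem dihedralEmbedding_injective [CharZero R]
    (hφ : φ (ofAdd 1) = MulEquiv.inv (Multiplicative R)) : Injective (dihedralEmbedding hφ) := by
  have hr := dihedralEmbedding_r hφ
  have hsr := dihedralEmbedding_sr hφ
  rintro (i | i) (j | j) h
  · exact congrArg r <| Int.cast_injective <| neg_injective <|
      congrArg (toAdd ∘ left) ((hr i).symm.trans (h.trans (hr j)))
  · exact absurd (congrArg right ((hr i).symm.trans (h.trans (hsr j)))).symm ofAdd_one_ne_one
  · exact absurd (congrArg right ((hsr i).symm.trans (h.trans (hr j)))) ofAdd_one_ne_one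
  · exact congrArg sr <| Int.cast_injective <|
      congrArg (toAdd ∘ left) ((hsr i).symm.trans (h.trans (hsr j)))

theorem dense_image_range_dihedralEmbedding [TopologicalSpace R]
    [TopologicalSpace (Multiplicative (ZMod 2))]
    (hφ : φ (ofAdd 1) = MulEquiv.inv (Multiplicative R)) (hR : DenseRange (Int.cast : ℤ → R)) :
    Dense ((fun x => (x.left, x.right)) '' range (dihedralEmbedding hφ)) := by
  refine Dense.mono ?_ (hR.prod dense_univ)
  rintro ⟨_, ε⟩ ⟨⟨n, rfl⟩, -⟩
  rcases eq_one_or_eq_ofAdd_one ε with rfl | rfl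
  · exact ⟨_, ⟨r (-n), rfl⟩, by rw [dihedralEmbedding_r hφ, Int.cast_neg, neg_neg]; rfl⟩
  · exact ⟨_, ⟨sr n, rfl⟩, by rw [dihedralEmbedding_sr hφ]; rfl⟩

end SemidirectProduct

/-- The homomorphism from the free product `ℤ/2ℤ * ℤ/2ℤ` to the semidirect product
`G = ℤ_p ⋊ ℤ/2ℤ` (the nontrivial element of `ℤ/2ℤ` acting on the additive group of `ℤ_p` by
negation, `G` with the product topology) sending the generator of the first factor to `(0, 1̄)`
and the generator of the second factor to `(1, 1̄)` is injective with dense image: `ℤ_p ⋊ ℤ/2ℤ`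
has a dense subgroup isomorphic to the amalgam `ℤ/2ℤ * ℤ/2ℤ`, i.e. it is "presqu'amalgamé". -/
theorem padic_semidirect_presque_amalgame (p : ℕ) [Fact p.Prime]
    (φ : Multiplicative (ZMod 2) →* MulAut (Multiplicative (PadicInt p)))
    (hφ : φ (Multiplicative.ofAdd (1 : ZMod 2)) = MulEquiv.inv (Multiplicative (PadicInt p)))
    (ψ : Monoid.Coprod (Multiplicative (ZMod 2)) (Multiplicative (ZMod 2)) →*
      SemidirectProduct (Multiplicative (PadicInt p)) (Multiplicative (ZMod 2)) φ)
    (hψ₁ : ψ (Monoid.Coprod.inl (Multiplicative.ofAdd (1 : ZMod 2))) =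
      ⟨Multiplicative.ofAdd (0 : PadicInt p), Multiplicative.ofAdd (1 : ZMod 2)⟩)
    (hψ₂ : ψ (Monoid.Coprod.inr (Multiplicative.ofAdd (1 : ZMod 2))) =
      ⟨Multiplicative.ofAdd (1 : PadicInt p), Multiplicative.ofAdd (1 : ZMod 2)⟩) :
    letI : TopologicalSpace (ZMod 2) := ⊥
    letI : TopologicalSpace
        (SemidirectProduct (Multiplicative (PadicInt p)) (Multiplicative (ZMod 2)) φ) :=
      TopologicalSpace.induced (fun x => (x.left, x.right)) inferInstance
    Function.Injective ψ ∧
      Dense (Set.range ψ :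
        Set (SemidirectProduct (Multiplicative (PadicInt p)) (Multiplicative (ZMod 2)) φ)) := by
  have hψσ : ψ.comp dihedralToCoprod = SemidirectProduct.dihedralEmbedding hφ :=
    ψ.comp_liftInvolutions hψ₁ hψ₂
  refine ⟨.of_comp_right ?_ dihedralToCoprod_surjective, ?_⟩
  · rw [← MonoidHom.coe_comp, hψσ]
    exact SemidirectProduct.dihedralEmbedding_injective hφ
  · rw [← dihedralToCoprod_surjective.range_comp, ← MonoidHom.coe_comp, hψσ]
    intro x
    rw [closure_induced, (SemidirectProduct.dense_image_range_dihedralEmbedding hφ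
      PadicInt.denseRange_intCast).closure_eq]
    exact mem_univ _
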